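/- arXiv:2404.05810 — 5 statements merged into one kernel-verified Lean document; each statement's English description precedes it below -/
import Mathlib

section
/- Let H be a Hermitian operator on a finite-dimensional complex Hilbert space and n a positive natural number. Define SHIFT_n(H) := Σ_{j=0}^{2^n - 1} |j⟩⟨j| ⊗ (H - (2πj/2^n)·I) acting on ℂ^{2^n} ⊗ V. Then exp(i·SHIFT_n(H)) = (⊗_{m=0}^{n-1} Phase(2^m · 2π / 2^n)) ⊗ exp(iH), where Phase(θ) is the 2×2 diagonal matrix diag(1, e^{-iθ}) and the tensor factor at position m acts on the m-th qubit of the n-qubit register storing j in binary. -/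
/-!
In the Kronecker ordering, `i·SHIFT_n(H)` is block diagonal with blocks `i(H - θ_j)`,
`θ_j = 2πj/2^n`. The scalar `θ_j` commutes with `H`, so each block exponentiates to
`e^{-iθ_j} e^{iH}`, and the exponential is `diag(e^{-iθ_j}) ⊗ e^{iH}`. Finally
`e^{-iθ_j} = ω^j` with `ω = e^{-2πi/2^n}`, and the binary expansion `j = Σ_m j_m 2^m` splits
`ω^j` into the product of the phase-gate entries `ω^{2^m}` over the bits set in `j`.
-/

open Matrix NormedSpace
open scoped Kronecker Real

namespace Matrix

variable {l m n : Type*}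

theorem sum_single_kronecker [Fintype l] [DecidableEq l] {α : Type*} [NonAssocSemiring α]
    (M : l → Matrix m n α) :
    ∑ j, single j j (1 : α) ⊗ₖ M j =
      reindex (Equiv.prodComm _ _) (Equiv.prodComm _ _) (blockDiagonal M) := by
  ext ⟨a, b⟩ ⟨c, e⟩
  rw [sum_apply, Finset.sum_eq_single a]
  · rcases eq_or_ne a c with rfl | hac <;> simp [*, blockDiagonal_apply]
  · intro j _ hj
    simp [hj]
  · simp

variable [Fintype m] [DecidableEq m]

theorem exp_reindex [Fintype n] [DecidableEq n] {𝔸 : Type*} [Ring 𝔸] [TopologicalSpace 𝔸]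
    [IsTopologicalRing 𝔸] [T2Space 𝔸] [Algebra ℚ 𝔸] (e : m ≃ n) (M : Matrix m m 𝔸) :
    exp (reindex e e M) = reindex e e (exp M) := by
  let φ : Matrix m m 𝔸 ≃L[ℚ] Matrix n n 𝔸 :=
    { reindexLinearEquiv ℚ 𝔸 e e with
      continuous_toFun := continuous_id.matrix_reindex e e
      continuous_invFun := continuous_id.matrix_reindex e.symm e.symm }
  have hpow (k : ℕ) : reindex e e M ^ k = reindex e e (M ^ k) :=
    ((reindexAlgEquiv ℚ 𝔸 e).map_pow M k).symm
  have hφ := φ.map_tsum (L := SummationFilter.unconditional ℕ)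
    (f := fun k : ℕ => (k.factorial⁻¹ : ℚ) • M ^ k)
  simp only [map_smul] at hφ
  rw [exp_eq_tsum_rat, exp_eq_tsum_rat]
  simp only [hpow]
  exact hφ.symm

variable {𝔸 : Type*}

theorem exp_pi_apply {ι : Type*} [Finite ι] [NormedRing 𝔸] [NormedAlgebra ℚ 𝔸]
    [CompleteSpace 𝔸] (v : ι → Matrix m m 𝔸) (i : ι) : exp v i = exp (v i) := by
  -- Under `Norms.Operator` instance search misses completeness: the uniformities agree only up to
  -- unfolding.
  have hc : CompleteSpace (Matrix m m 𝔸) := inferInstance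
  open scoped Norms.Operator in
  exact @Pi.coe_exp ι (fun _ => Matrix m m 𝔸) _ _ _ (fun _ => hc) v i

theorem exp_add_smul_one [NormedCommRing 𝔸] [NormedAlgebra ℚ 𝔸] [CompleteSpace 𝔸]
    (A : Matrix m m 𝔸) (z : 𝔸) : exp (A + z • 1) = exp z • exp A := by
  rw [add_comm, exp_add_of_commute _ _ ((Commute.one_left A).smul_left z), smul_one_eq_diagonal,
    exp_diagonal, Pi.exp_def, ← smul_one_eq_diagonal, smul_one_mul]

end Matrix

theorem Nat.prod_range_ite_testBit_pow {M : Type*} [CommMonoid M] (z : M) {n j : ℕ}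
    (hj : j < 2 ^ n) :
    ∏ m ∈ Finset.range n, (if j.testBit m then z ^ 2 ^ m else 1) = z ^ j := by
  rw [← Finset.prod_filter, Finset.prod_pow_eq_pow_sum]
  congr 1
  conv_rhs => rw [← Finset.sum_toFinset_bitIndices_two_pow j]
  congr 1
  ext i
  simp only [Finset.mem_filter, Finset.mem_range, List.mem_toFinset, Nat.mem_bitIndices,
    and_iff_right_iff_imp]
  intro hi
  exact (Nat.pow_lt_pow_iff_right (by norm_num)).1 ((Nat.ge_two_pow_of_testBit hi).trans_lt hj)

theorem Complex.exp_neg_mul_I_eq_prod_testBit {n j : ℕ} (hj : j < 2 ^ n) :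
    Complex.exp (-(Complex.I * ((2 * π * j / 2 ^ n : ℝ) : ℂ))) =
      ∏ m ∈ Finset.range n, if j.testBit m then
        Complex.exp (-Complex.I * ((2 ^ m * 2 * π / 2 ^ n : ℝ) : ℂ)) else 1 := by
  set ω := Complex.exp (-Complex.I * (2 * π / 2 ^ n))
  have hω (k : ℕ) : ω ^ k = Complex.exp (-Complex.I * ((k * 2 * π / 2 ^ n : ℝ) : ℂ)) := by
    rw [← Complex.exp_nat_mul]
    push_cast
    ring_nf
  have hω_two_pow (m : ℕ) :
      Complex.exp (-Complex.I * ((2 ^ m * 2 * π / 2 ^ n : ℝ) : ℂ)) = ω ^ 2 ^ m := by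
    rw [hω]
    push_cast
    rfl
  simp_rw [hω_two_pow, Nat.prod_range_ite_testBit_pow ω hj, hω]
  push_cast
  ring_nf

-- The diagonal factor is `⊗_{m<n} Phase(2^m·2π/2^n)`, qubit `m` holding bit `m` of `j`.
theorem stmt2_general (n : ℕ) {d : ℕ} (H : Matrix (Fin d) (Fin d) ℂ) :
    NormedSpace.exp (Complex.I • ∑ j : Fin (2 ^ n),
        (Matrix.single j j (1:ℂ)) ⊗ₖ
          (H - (((2 * π * (j : ℕ) / 2 ^ n : ℝ)) : ℂ) • (1 : Matrix (Fin d) (Fin d) ℂ)))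
      = (Matrix.diagonal fun j : Fin (2 ^ n) =>
          ∏ m ∈ Finset.range n,
            if Nat.testBit (j : ℕ) m then
              Complex.exp (-Complex.I * ((2 ^ m * 2 * π / 2 ^ n : ℝ) : ℂ)) else 1)
        ⊗ₖ NormedSpace.exp (Complex.I • H) := by
  simp_rw [Finset.smul_sum, ← kronecker_smul, smul_sub, smul_smul, sub_eq_add_neg, ← neg_smul]
  rw [sum_single_kronecker, exp_reindex, exp_blockDiagonal, diagonal_kronecker]
  congr 2
  funext j
  rw [exp_pi_apply, exp_add_smul_one, ← Complex.exp_eq_exp_ℂ,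
    Complex.exp_neg_mul_I_eq_prod_testBit j.is_lt]

/-- `exp(i·SHIFT_n(H)) = (⊗_m Phase(2^m·2π/2^n)) ⊗ exp(iH)`: the shifted Hamiltonian
`SHIFT_n(H) = Σ_j |j⟩⟨j| ⊗ (H − (2πj/2^n)·I)` exponentiates to the tensor product of
single-qubit phase gates (whose `n`-fold tensor product is the diagonal matrix with
entries `∏_{m<n} (bit m of j = 1 ? e^{-i 2^m·2π/2^n} : 1)`) with `exp(iH)`. -/
theorem stmt2 (n : ℕ) (hn : 0 < n) {d : ℕ} (H : Matrix (Fin d) (Fin d) ℂ)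
    (hH : H.IsHermitian) :
    NormedSpace.exp (Complex.I • ∑ j : Fin (2 ^ n),
        (Matrix.single j j (1:ℂ)) ⊗ₖ
          (H - (((2 * π * (j : ℕ) / 2 ^ n : ℝ)) : ℂ) • (1 : Matrix (Fin d) (Fin d) ℂ)))
      = (Matrix.diagonal fun j : Fin (2 ^ n) =>
          ∏ m ∈ Finset.range n,
            if Nat.testBit (j : ℕ) m then
              Complex.exp (-Complex.I * ((2 ^ m * 2 * π / 2 ^ n : ℝ) : ℂ)) else 1)
        ⊗ₖ NormedSpace.exp (Complex.I • H) :=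
  stmt2_general n H
end

section
/- Let A be a Hermitian operator with ‖A‖ ≤ 1, Π an orthogonal projection, δ ∈ (0,1), and H₀ := I - 2Π. For t ≥ 0 define U₁(t) := (√δ/(2i)) ∫₀ᵗ e^{iH₀s} A e^{-iH₀s} ds. Then ‖(I - Π) U₁(t) Π‖ = ‖(I-Π)AΠ‖ · (√δ/2)·|sin t|, and in particular ‖(I - Π) U₁(t) Π‖ ≤ √δ/2 for all t, and ‖(I - Π) U₁(kπ) Π‖ = 0 for every k ∈ ℕ. -/
open NormedSpace
open scoped Real

/-!
Since `(1 - p) H₀ = 1 - p` and `H₀ p = -p`, the exponential series give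
`(1 - p) e^{isH₀} = e^{is} (1 - p)` and `e^{-isH₀} p = e^{is} p`. Hence compressing the integrand
of `U₁(t)` yields `e^{2is} (1 - p) A p`, and the integral collapses to the scalar
`∫₀ᵗ e^{2is} ds = e^{it} sin t`. The bound follows from `‖1 - p‖, ‖p‖ ≤ 1`.
-/

open ContinuousLinearMap

theorem IsIdempotentElem.one_sub_mul_one_sub_two_smul {R : Type*} [Ring R] [Algebra ℂ R] {p : R}
    (hp : IsIdempotentElem p) : (1 - p) * (1 - (2 : ℂ) • p) = 1 - p := by
  simp only [mul_sub, mul_one, mul_smul_comm, sub_mul, one_mul, hp.eq]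
  module

theorem IsIdempotentElem.one_sub_two_smul_mul {R : Type*} [Ring R] [Algebra ℂ R] {p : R}
    (hp : IsIdempotentElem p) : (1 - (2 : ℂ) • p) * p = -p := by
  simp only [sub_mul, one_mul, smul_mul_assoc, hp.eq]
  module

section Conjugation

variable {𝔸 : Type*} [NormedRing 𝔸] [NormedAlgebra ℂ 𝔸] [CompleteSpace 𝔸]

theorem map_exp_eq_of_map_pow {E : Type*} [NormedAddCommGroup E] [NormedSpace ℂ E]
    (f : 𝔸 →L[ℂ] E) {M : 𝔸} {c : ℂ} {v : E} (h : ∀ k : ℕ, f (M ^ k) = c ^ k • v) :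
    f (exp M) = Complex.exp c • v := by
  have hM := (exp_series_hasSum_exp' (𝕂 := ℂ) M).mapL f
  have hc := (exp_series_hasSum_exp' (𝕂 := ℂ) c).smul_const v
  rw [Complex.exp_eq_exp_ℂ]
  refine hM.unique (hc.congr_fun fun k => ?_)
  simp only [map_smul, h, smul_smul, smul_eq_mul]

theorem mul_exp_eq_smul_of_mul_eq_smul {q M : 𝔸} {c : ℂ} (h : q * M = c • q) :
    q * exp M = Complex.exp c • q := by
  refine map_exp_eq_of_map_pow (ContinuousLinearMap.mul ℂ 𝔸 q) fun k => ?_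
  induction k with
  | zero => simp
  | succ k ih =>
    simp only [mul_apply'] at ih ⊢
    rw [pow_succ, ← mul_assoc, ih, smul_mul_assoc, h, smul_smul, pow_succ]

theorem exp_mul_eq_smul_of_mul_eq_smul {q M : 𝔸} {c : ℂ} (h : M * q = c • q) :
    exp M * q = Complex.exp c • q := by
  refine map_exp_eq_of_map_pow ((ContinuousLinearMap.mul ℂ 𝔸).flip q) fun k => ?_
  induction k with
  | zero => simp
  | succ k ih =>
    simp only [flip_apply, mul_apply'] at ih ⊢
    rw [pow_succ, mul_assoc, h, mul_smul_comm, ih, smul_smul, pow_succ']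

variable {H q p : 𝔸} (hq : q * H = q) (hp : H * p = -p)
include hq hp

theorem mul_conj_exp_mul_eq_smul (A : 𝔸) (s : ℂ) :
    q * (exp ((Complex.I * s) • H) * A * exp ((-Complex.I * s) • H)) * p
      = Complex.exp (2 * Complex.I * s) • (q * A * p) := by
  have hl : q * exp ((Complex.I * s) • H) = Complex.exp (Complex.I * s) • q :=
    mul_exp_eq_smul_of_mul_eq_smul (by rw [mul_smul_comm, hq])
  have hr : exp ((-Complex.I * s) • H) * p = Complex.exp (Complex.I * s) • p :=
    exp_mul_eq_smul_of_mul_eq_smul (by rw [smul_mul_assoc, hp]; module)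
  calc _ = (q * exp ((Complex.I * s) • H)) * A * (exp ((-Complex.I * s) • H) * p) := by
        simp only [mul_assoc]
    _ = (Complex.exp (Complex.I * s) * Complex.exp (Complex.I * s)) • (q * A * p) := by
      rw [hl, hr, smul_mul_assoc, smul_mul_assoc, mul_smul_comm, smul_smul]
    _ = Complex.exp (2 * Complex.I * s) • (q * A * p) := by rw [← Complex.exp_add]; ring_nf

theorem mul_integral_conj_exp_mul_eq_smul (A : 𝔸) (t : ℝ) :
    q * (∫ s in (0 : ℝ)..t, exp ((Complex.I * s) • H) * A * exp ((-Complex.I * s) • H)) * p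
      = (∫ s in (0 : ℝ)..t, Complex.exp (2 * Complex.I * s)) • (q * A * p) := by
  have hexp : Continuous (exp : 𝔸 → 𝔸) :=
    continuous_iff_continuousAt.2 fun x => (exp_analytic (𝕂 := ℂ) x).continuousAt
  have hint : IntervalIntegrable
      (fun s : ℝ => exp ((Complex.I * s) • H) * A * exp ((-Complex.I * s) • H))
      MeasureTheory.volume 0 t :=
    Continuous.intervalIntegrable (by fun_prop) 0 t
  rw [← mulLeftRight_apply ℂ, ← (mulLeftRight ℂ 𝔸 q p).intervalIntegral_comp_comm hint]
  simp only [mulLeftRight_apply, mul_conj_exp_mul_eq_smul hq hp]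
  exact intervalIntegral.integral_smul_const _ _

end Conjugation

theorem norm_integral_exp_two_mul_I (t : ℝ) :
    ‖∫ s in (0 : ℝ)..t, Complex.exp (2 * Complex.I * s)‖ = |Real.sin t| := by
  rw [integral_exp_mul_complex (by simp), Complex.ofReal_zero, mul_zero, Complex.exp_zero,
    norm_div, show 2 * Complex.I * t = Complex.I * ((2 * t : ℝ) : ℂ) by push_cast; ring,
    Complex.norm_exp_I_mul_ofReal_sub_one]
  simp

theorem IsStarProjection.norm_one_sub_mul_mul_le {𝔸 : Type*} [NormedRing 𝔸] [StarRing 𝔸]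
    [CStarRing 𝔸] {p : 𝔸} (hp : IsStarProjection p) (A : 𝔸) : ‖(1 - p) * A * p‖ ≤ ‖A‖ :=
  calc ‖(1 - p) * A * p‖ ≤ ‖1 - p‖ * ‖A‖ * ‖p‖ := norm_mul₃_le
    _ ≤ 1 * ‖A‖ * 1 := by
      gcongr
      exacts [hp.one_sub.norm_le, hp.norm_le]
    _ = ‖A‖ := by ring

theorem stmt4_general {n : ℕ} (A p H₀ : EuclideanSpace ℂ (Fin n) →L[ℂ] EuclideanSpace ℂ (Fin n))
    (hA1 : ‖A‖ ≤ 1)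
    (hidem : IsIdempotentElem p) (hpsa : IsSelfAdjoint p)
    (δ : ℝ)
    (hH₀ : H₀ = 1 - (2:ℂ) • p)
    (U₁ : ℝ → EuclideanSpace ℂ (Fin n) →L[ℂ] EuclideanSpace ℂ (Fin n))
    (hU₁ : ∀ t : ℝ, U₁ t = ((Real.sqrt δ : ℂ) / (2 * Complex.I)) •
      ∫ s in (0:ℝ)..t, exp ((Complex.I * s) • H₀) ∘L A ∘L exp ((-Complex.I * s) • H₀)) :
    (∀ t : ℝ, 0 ≤ t →
      ‖(1 - p) ∘L U₁ t ∘L p‖ = ‖(1 - p) ∘L A ∘L p‖ * (Real.sqrt δ / 2) * |Real.sin t|) ∧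
    (∀ t : ℝ, 0 ≤ t → ‖(1 - p) ∘L U₁ t ∘L p‖ ≤ Real.sqrt δ / 2) ∧
    (∀ k : ℕ, ‖(1 - p) ∘L U₁ (k * π) ∘L p‖ = 0) := by
  subst hH₀
  have hcomp : ∀ X Y : EuclideanSpace ℂ (Fin n) →L[ℂ] EuclideanSpace ℂ (Fin n),
      X ∘L Y = X * Y := fun _ _ => rfl
  have hleak : ∀ t : ℝ,
      ‖(1 - p) ∘L U₁ t ∘L p‖ = ‖(1 - p) ∘L A ∘L p‖ * (Real.sqrt δ / 2) * |Real.sin t| := by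
    intro t
    have h := mul_integral_conj_exp_mul_eq_smul hidem.one_sub_mul_one_sub_two_smul
      hidem.one_sub_two_smul_mul A t
    have hc : ‖(Real.sqrt δ : ℂ) / (2 * Complex.I)‖ = Real.sqrt δ / 2 := by
      simp [abs_of_nonneg (Real.sqrt_nonneg δ)]
    rw [hU₁]
    simp only [hcomp, ← mul_assoc] at h ⊢
    rw [mul_smul_comm, smul_mul_assoc, h, norm_smul, norm_smul, norm_integral_exp_two_mul_I, hc]
    ring
  have hB : ‖(1 - p) ∘L A ∘L p‖ ≤ 1 :=
    (IsStarProjection.norm_one_sub_mul_mul_le ⟨hidem, hpsa⟩ A).trans hA1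
  refine ⟨fun t _ => hleak t, fun t _ => ?_, fun k => ?_⟩
  · rw [hleak]
    calc _ ≤ 1 * (Real.sqrt δ / 2) * 1 := by gcongr; exact Real.abs_sin_le_one t
      _ = Real.sqrt δ / 2 := by ring
  · rw [hleak, Real.sin_nat_mul_pi, abs_zero, mul_zero]

/-- First-order Dyson term leakage: with `H₀ = 1 - 2p` and
`U₁(t) = (√δ/(2i)) ∫₀ᵗ e^{iH₀s} A e^{-iH₀s} ds`, the off-diagonal block satisfies
`‖(1-p) U₁(t) p‖ = ‖(1-p)Ap‖ (√δ/2)|sin t|`, is at most `√δ/2`, and vanishes at `t = kπ`. -/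
theorem stmt4 {n : ℕ} (A p H₀ : EuclideanSpace ℂ (Fin n) →L[ℂ] EuclideanSpace ℂ (Fin n))
    (hA : IsSelfAdjoint A) (hA1 : ‖A‖ ≤ 1)
    (hidem : IsIdempotentElem p) (hpsa : IsSelfAdjoint p)
    (δ : ℝ) (hδ : δ ∈ Set.Ioo (0:ℝ) 1)
    (hH₀ : H₀ = 1 - (2:ℂ) • p)
    (U₁ : ℝ → EuclideanSpace ℂ (Fin n) →L[ℂ] EuclideanSpace ℂ (Fin n))
    (hU₁ : ∀ t : ℝ, U₁ t = ((Real.sqrt δ : ℂ) / (2 * Complex.I)) •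
      ∫ s in (0:ℝ)..t, exp ((Complex.I * s) • H₀) ∘L A ∘L exp ((-Complex.I * s) • H₀)) :
    (∀ t : ℝ, 0 ≤ t →
      ‖(1 - p) ∘L U₁ t ∘L p‖ = ‖(1 - p) ∘L A ∘L p‖ * (Real.sqrt δ / 2) * |Real.sin t|) ∧
    (∀ t : ℝ, 0 ≤ t → ‖(1 - p) ∘L U₁ t ∘L p‖ ≤ Real.sqrt δ / 2) ∧
    (∀ k : ℕ, ‖(1 - p) ∘L U₁ (k * π) ∘L p‖ = 0) :=
  stmt4_general A p H₀ hA1 hidem hpsa δ hH₀ U₁ hU₁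
end

section
/- Let H₀ be Hermitian with ‖H₀‖ ≤ 1, A bounded with ‖A‖ ≤ 1, δ ∈ (0,1), and define Dyson terms U₀(t) = I, U_k(t) = (√δ/(2i)) ∫₀ᵗ e^{iH₀s} A e^{-iH₀s} U_{k-1}(s) ds. Suppose ‖U_k(t)‖ ≤ t^k δ^{k/2}/(k! 2^k) for all k. Then for all k ≥ 1 and t ≥ 0, ‖∫₀ᵗ e^{2is} U_k(s) ds‖ ≤ t^k δ^{k/2} / (k! · 2). -/
/-!
Since `U_k(0) = 0`, integrating by parts against `e^{2is} = d/ds (e^{2is}/(2i))` bounds the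
integral by `(‖U_k(t)‖ + ∫₀ᵗ ‖U_k'‖) / 2`. Conjugation by the unitaries `e^{±iH₀s}` preserves norms,
so `‖U_k'(s)‖ ≤ (√δ/2) ‖U_{k-1}(s)‖`, and integrating the bound for `U_{k-1}` reproduces the bound
`t^k δ^{k/2} / (k! 2^k)` for `U_k`. Both terms are therefore at most that bound, which is at most
`t^k δ^{k/2} / (k! · 2)`.
-/

section Oscillatory

open Complex

lemma norm_integral_exp_mul_I_smul_le {E : Type*} [NormedAddCommGroup E] [NormedSpace ℂ E]
    [CompleteSpace E] {v v' : ℝ → E} {ω t : ℝ} (hω : ω ≠ 0) (ht : 0 ≤ t)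
    (hv : ∀ s, HasDerivAt v (v' s) s) (hv' : Continuous v') (hv0 : v 0 = 0) :
    ‖∫ s in (0:ℝ)..t, exp (ω * I * s) • v s‖ ≤
      (‖v t‖ + ∫ s in (0:ℝ)..t, ‖v' s‖) / |ω| := by
  set u : ℝ → ℂ := fun s ↦ exp (ω * I * s) / (ω * I)
  have hωI : (ω * I : ℂ) ≠ 0 := mul_ne_zero (ofReal_ne_zero.mpr hω) I_ne_zero
  have hu : ∀ s : ℝ, HasDerivAt u (exp (ω * I * s)) s := fun s ↦ by
    have := (((hasDerivAt_id (s : ℂ)).const_mul (ω * I)).cexp.div_const (ω * I)).comp_ofReal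
    simpa [hωI] using this
  have hnorm_u : ∀ s : ℝ, ‖u s‖ = 1 / |ω| := fun s ↦ by
    rw [norm_div, show (ω * I * s : ℂ) = ((ω * s : ℝ) : ℂ) * I by push_cast; ring,
      norm_exp_ofReal_mul_I, norm_mul, norm_I, norm_real, Real.norm_eq_abs, mul_one]
  have hparts := intervalIntegral.integral_smul_deriv_eq_deriv_smul (fun s _ ↦ hu s)
    (fun s _ ↦ hv s)
    ((by fun_prop : Continuous fun s : ℝ ↦ exp (ω * I * s)).intervalIntegrable _ _)
    (hv'.intervalIntegrable 0 t)
  rw [hv0, smul_zero, sub_zero] at hparts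
  have hrest :
      ‖∫ s in (0:ℝ)..t, u s • v' s‖ ≤ (∫ s in (0:ℝ)..t, ‖v' s‖) / |ω| := by
    calc ‖∫ s in (0:ℝ)..t, u s • v' s‖ ≤ ∫ s in (0:ℝ)..t, ‖u s • v' s‖ :=
          intervalIntegral.norm_integral_le_integral_norm ht
      _ = (∫ s in (0:ℝ)..t, ‖v' s‖) / |ω| := by
          simp only [norm_smul, hnorm_u, intervalIntegral.integral_const_mul]; ring
  calc ‖∫ s in (0:ℝ)..t, exp (ω * I * s) • v s‖
      = ‖u t • v t - ∫ s in (0:ℝ)..t, u s • v' s‖ := by rw [hparts, sub_sub_cancel]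
    _ ≤ ‖u t • v t‖ + ‖∫ s in (0:ℝ)..t, u s • v' s‖ := norm_sub_le _ _
    _ ≤ ‖v t‖ / |ω| + (∫ s in (0:ℝ)..t, ‖v' s‖) / |ω| := by
        rw [norm_smul, hnorm_u, one_div_mul_eq_div]; gcongr
    _ = (‖v t‖ + ∫ s in (0:ℝ)..t, ‖v' s‖) / |ω| := by ring

end Oscillatory

open NormedSpace

section IntegralRecursion

variable {𝒜 : Type*} [NormedRing 𝒜] [NormedAlgebra ℂ 𝒜] {V : ℝ → 𝒜} {U : ℕ → ℝ → 𝒜} {c : ℂ}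

lemma hasDerivAt_of_integral_recursion [CompleteSpace 𝒜] (hV : Continuous V)
    (hU : ∀ k t, U (k + 1) t = c • ∫ s in (0:ℝ)..t, V s * U k s) {k : ℕ}
    (hUk : Continuous (U k)) (t : ℝ) :
    HasDerivAt (U (k + 1)) (c • (V t * U k t)) t := by
  rw [show U (k + 1) = fun t ↦ c • ∫ s in (0:ℝ)..t, V s * U k s from funext (hU k)]
  have hcont : Continuous fun s ↦ V s * U k s := hV.mul hUk
  exact (intervalIntegral.integral_hasDerivAt_right (hcont.intervalIntegrable 0 t)
    (hcont.stronglyMeasurableAtFilter _ _) hcont.continuousAt).const_smul c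

lemma integral_recursion_apply_zero
    (hU : ∀ k t, U (k + 1) t = c • ∫ s in (0:ℝ)..t, V s * U k s) (k : ℕ) :
    U (k + 1) 0 = 0 := by
  rw [hU, intervalIntegral.integral_same, smul_zero]

lemma continuous_of_integral_recursion [CompleteSpace 𝒜] (hV : Continuous V)
    (hU0 : Continuous (U 0)) (hU : ∀ k t, U (k + 1) t = c • ∫ s in (0:ℝ)..t, V s * U k s)
    (k : ℕ) : Continuous (U k) := by
  induction k with
  | zero => exact hU0
  | succ k ih => exact continuous_iff_continuousAt.mpr fun t ↦
      (hasDerivAt_of_integral_recursion hV hU ih t).continuousAt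

end IntegralRecursion

noncomputable def dysonBound (x t : ℝ) (k : ℕ) : ℝ := t ^ k * x ^ k / (k.factorial * 2 ^ k)

lemma integral_half_mul_dysonBound (x t : ℝ) (m : ℕ) :
    ∫ s in (0:ℝ)..t, x / 2 * dysonBound x s m = dysonBound x t (m + 1) := by
  have hm : (m.factorial : ℝ) ≠ 0 := by positivity
  simp_rw [dysonBound, show ∀ s : ℝ, x / 2 * (s ^ m * x ^ m / (m.factorial * 2 ^ m)) =
    x ^ (m + 1) / (m.factorial * 2 ^ (m + 1)) * s ^ m from fun s ↦ by field_simp; ring]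
  rw [intervalIntegral.integral_const_mul, integral_pow, Nat.factorial_succ]
  push_cast
  field_simp
  ring

section CStarAlgebra

variable {𝒜 : Type*} [CStarAlgebra 𝒜]

lemma exp_I_mul_ofReal_smul_mem_unitary {H : 𝒜} (hH : IsSelfAdjoint H) (s : ℝ) :
    exp ((Complex.I * s) • H) ∈ unitary 𝒜 := by
  have := (selfAdjoint.expUnitary ⟨s • H, (IsSelfAdjoint.all s).smul hH⟩).prop
  simpa [mul_smul, Complex.coe_smul] using this

lemma norm_exp_I_mul_ofReal_smul_conj {H : 𝒜} (hH : IsSelfAdjoint H) (s : ℝ) (B : 𝒜) :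
    ‖exp ((Complex.I * s) • H) * B * exp ((-Complex.I * s) • H)‖ = ‖B‖ := by
  have hneg : -Complex.I * s = Complex.I * ((-s : ℝ) : ℂ) := by push_cast; ring
  rw [hneg, CStarRing.norm_mul_mem_unitary _ (exp_I_mul_ofReal_smul_mem_unitary hH _),
    CStarRing.norm_mem_unitary_mul _ (exp_I_mul_ofReal_smul_mem_unitary hH _)]

lemma continuous_exp_mul_ofReal_smul (z : ℂ) (H : 𝒜) :
    Continuous fun s : ℝ ↦ exp ((z * s) • H) :=
  (differentiable_exp_smul_const ℂ H).continuous.comp (by fun_prop)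

lemma continuous_exp_I_mul_ofReal_smul_conj (H B : 𝒜) :
    Continuous fun s : ℝ ↦ exp ((Complex.I * s) • H) * B * exp ((-Complex.I * s) • H) :=
  ((continuous_exp_mul_ofReal_smul _ H).mul continuous_const).mul
    (continuous_exp_mul_ofReal_smul _ H)

lemma integral_norm_smul_conj_mul_le {H B : 𝒜} (hH : IsSelfAdjoint H) (hB : ‖B‖ ≤ 1)
    {W : ℝ → 𝒜} (hW : Continuous W) {c : ℂ} {x t : ℝ} (ht : 0 ≤ t) (hc : ‖c‖ ≤ x / 2)
    {m : ℕ} (hWm : ∀ s, 0 ≤ s → ‖W s‖ ≤ dysonBound x s m) :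
    ∫ s in (0:ℝ)..t,
        ‖c • (exp ((Complex.I * s) • H) * B * exp ((-Complex.I * s) • H) * W s)‖ ≤
      dysonBound x t (m + 1) := by
  rw [← integral_half_mul_dysonBound]
  have hcont := (((continuous_exp_I_mul_ofReal_smul_conj H B).mul hW).const_smul c).norm
  refine intervalIntegral.integral_mono_on ht (hcont.intervalIntegrable _ _)
    (Continuous.intervalIntegrable (by unfold dysonBound; fun_prop) _ _) fun s hs ↦ ?_
  calc _ ≤ ‖c‖ * (‖exp ((Complex.I * s) • H) * B * exp ((-Complex.I * s) • H)‖ * ‖W s‖) := by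
        rw [norm_smul]; gcongr; exact norm_mul_le _ _
    _ ≤ x / 2 * (1 * dysonBound x s m) := by
        rw [norm_exp_I_mul_ofReal_smul_conj hH s B]
        gcongr
        · exact (norm_nonneg c).trans hc
        · exact hWm s hs.1
    _ = x / 2 * dysonBound x s m := by rw [one_mul]

end CStarAlgebra

theorem stmt7_general {n : ℕ} (A H₀ : EuclideanSpace ℂ (Fin n) →L[ℂ] EuclideanSpace ℂ (Fin n))
    (hA1 : ‖A‖ ≤ 1) (hH₀ : IsSelfAdjoint H₀)
    (δ : ℝ)
    (U : ℕ → ℝ → EuclideanSpace ℂ (Fin n) →L[ℂ] EuclideanSpace ℂ (Fin n))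
    (hU0 : ∀ t : ℝ, U 0 t = 1)
    (hU : ∀ (k : ℕ) (t : ℝ), U (k + 1) t = ((Real.sqrt δ : ℂ) / (2 * Complex.I)) •
      ∫ s in (0:ℝ)..t,
        exp ((Complex.I * s) • H₀) ∘L A ∘L exp ((-Complex.I * s) • H₀) ∘L U k s)
    (hbound : ∀ (k : ℕ) (t : ℝ), 0 ≤ t →
      ‖U k t‖ ≤ t ^ k * Real.sqrt δ ^ k / ((Nat.factorial k : ℝ) * 2 ^ k)) :
    ∀ (k : ℕ), 1 ≤ k → ∀ (t : ℝ), 0 ≤ t →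
      ‖∫ s in (0:ℝ)..t, Complex.exp (2 * Complex.I * s) • U k s‖
        ≤ t ^ k * Real.sqrt δ ^ k / ((Nat.factorial k : ℝ) * 2) := by
  intro k hk t ht
  obtain ⟨m, rfl⟩ : ∃ m, k = m + 1 := ⟨k - 1, by omega⟩
  set c : ℂ := (Real.sqrt δ : ℂ) / (2 * Complex.I)
  set V : ℝ → _ := fun s : ℝ ↦ exp ((Complex.I * s) • H₀) * A * exp ((-Complex.I * s) • H₀)
  have hV : Continuous V := continuous_exp_I_mul_ofReal_smul_conj H₀ A
  have hrec : ∀ k t, U (k + 1) t = c • ∫ s in (0:ℝ)..t, V s * U k s := hU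
  have hUc := continuous_of_integral_recursion hV (by simp only [funext hU0]; fun_prop) hrec
  have hc : ‖c‖ ≤ Real.sqrt δ / 2 := by simp [c, abs_of_nonneg (Real.sqrt_nonneg δ)]
  have hparts := norm_integral_exp_mul_I_smul_le (ω := 2) two_ne_zero ht
    (hasDerivAt_of_integral_recursion hV hrec (hUc m)) (by fun_prop)
    (integral_recursion_apply_zero hrec m)
  have hrest := integral_norm_smul_conj_mul_le hH₀ hA1 (hUc m) ht hc (hbound m)
  push_cast at hparts
  calc _ ≤ _ := hparts
    _ ≤ (dysonBound (Real.sqrt δ) t (m + 1) + dysonBound (Real.sqrt δ) t (m + 1)) / 2 := by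
        rw [abs_two]; gcongr; exact hbound _ t ht
    _ ≤ _ := by
        rw [add_self_div_two, dysonBound]
        gcongr
        exact le_self_pow₀ one_le_two (Nat.succ_ne_zero m)

/-- Integration-by-parts bound: `‖∫₀ᵗ e^{2is} U_k(s) ds‖ ≤ t^k δ^{k/2}/(k!·2)` for `k ≥ 1`. -/
theorem stmt7 {n : ℕ} (A H₀ : EuclideanSpace ℂ (Fin n) →L[ℂ] EuclideanSpace ℂ (Fin n))
    (hA1 : ‖A‖ ≤ 1) (hH₀ : IsSelfAdjoint H₀) (hH₀1 : ‖H₀‖ ≤ 1)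
    (δ : ℝ) (hδ : δ ∈ Set.Ioo (0:ℝ) 1)
    (U : ℕ → ℝ → EuclideanSpace ℂ (Fin n) →L[ℂ] EuclideanSpace ℂ (Fin n))
    (hU0 : ∀ t : ℝ, U 0 t = 1)
    (hU : ∀ (k : ℕ) (t : ℝ), U (k + 1) t = ((Real.sqrt δ : ℂ) / (2 * Complex.I)) •
      ∫ s in (0:ℝ)..t,
        exp ((Complex.I * s) • H₀) ∘L A ∘L exp ((-Complex.I * s) • H₀) ∘L U k s)
    (hbound : ∀ (k : ℕ) (t : ℝ), 0 ≤ t →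
      ‖U k t‖ ≤ t ^ k * Real.sqrt δ ^ k / ((Nat.factorial k : ℝ) * 2 ^ k)) :
    ∀ (k : ℕ), 1 ≤ k → ∀ (t : ℝ), 0 ≤ t →
      ‖∫ s in (0:ℝ)..t, Complex.exp (2 * Complex.I * s) • U k s‖
        ≤ t ^ k * Real.sqrt δ ^ k / ((Nat.factorial k : ℝ) * 2) :=
  stmt7_general A H₀ hA1 hH₀ δ U hU0 hU hbound
end

section
/- For all t ≥ 0 and all natural numbers m ≥ 0, |∫₀ᵗ e^{2is} · s^m / m! ds| ≤ t^m / m!. -/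
/-!
Write `F_m(t) = ∫₀ᵗ e^{cs} s^m/m! ds` with `Re c ≤ 0` and `|c| ≥ 2` (here `c = 2i`). Since
`|e^{cs}| ≤ 1`, trivially `|F_m(t)| ≤ t^{m+1}/(m+1)!`, which settles the case `t ≤ m + 1`
(the factor `t/(m+1)` is at most one). Integrating by parts,
`F_{m+1}(t) = t^{m+1}/(m+1)! · e^{ct}/c - F_m(t)/c`, so by induction
`|F_{m+1}(t)| ≤ (t^{m+1}/(m+1)! + t^m/m!)/2`, and for `t ≥ m + 1` the second term is the
smaller one.
-/

open Complex intervalIntegral Nat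

theorem pow_succ_div_factorial_succ {K : Type*} [Field K] [CharZero K] (x : K) (n : ℕ) :
    x ^ (n + 1) / (n + 1)! = x / (n + 1) * (x ^ n / n !) := by
  rw [factorial_succ, pow_succ]
  push_cast
  field_simp

theorem hasDerivAt_pow_succ_div_factorial_succ {𝕜 : Type*} [NontriviallyNormedField 𝕜]
    [CharZero 𝕜] (n : ℕ) (x : 𝕜) :
    HasDerivAt (fun z : 𝕜 => z ^ (n + 1) / (n + 1)!) (x ^ n / n !) x := by
  refine ((hasDerivAt_pow (n + 1) x).div_const _).congr_deriv ?_
  rw [factorial_succ, Nat.add_sub_cancel]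
  push_cast
  field_simp

noncomputable def expMulPowIntegral (c : ℂ) (m : ℕ) (t : ℝ) : ℂ :=
  ∫ s in (0 : ℝ)..t, exp (c * s) * (s : ℂ) ^ m / (m ! : ℂ)

variable {c : ℂ} {t : ℝ}

theorem expMulPowIntegral_zero (hc : c ≠ 0) (t : ℝ) :
    expMulPowIntegral c 0 t = (exp (c * t) - 1) / c := by
  simp [expMulPowIntegral, integral_exp_mul_complex hc]

theorem expMulPowIntegral_succ (hc : c ≠ 0) (m : ℕ) (t : ℝ) :
    expMulPowIntegral c (m + 1) t =
      (t : ℂ) ^ (m + 1) / (m + 1)! * (exp (c * t) / c) - expMulPowIntegral c m t / c := by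
  have ibp := integral_mul_deriv_eq_deriv_mul (a := 0) (b := t)
    (u := fun s : ℝ => (s : ℂ) ^ (m + 1) / (m + 1)!) (v := fun s : ℝ => exp (c * s) / c)
    (u' := fun s : ℝ => (s : ℂ) ^ m / m !) (v' := fun s : ℝ => exp (c * s))
    (fun x _ => (hasDerivAt_pow_succ_div_factorial_succ m (x : ℂ)).comp_ofReal)
    (fun x _ => by
      simpa [mul_div_cancel_right₀ _ hc] using
        (((hasDerivAt_id (x : ℂ)).const_mul c).cexp.div_const c).comp_ofReal)
    (by apply Continuous.intervalIntegrable; fun_prop)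
    (by apply Continuous.intervalIntegrable; fun_prop)
  simp only [ofReal_zero, zero_pow (succ_ne_zero m), zero_div, zero_mul, sub_zero] at ibp
  rw [expMulPowIntegral, expMulPowIntegral, ← integral_div]
  refine (integral_congr fun s _ => by ring).trans (ibp.trans ?_)
  congr 1
  exact integral_congr fun s _ => by ring

theorem norm_exp_mul_ofReal_le_one (hc : c.re ≤ 0) {s : ℝ} (hs : 0 ≤ s) :
    ‖exp (c * s)‖ ≤ 1 := by
  rw [norm_exp, Real.exp_le_one_iff, re_mul_ofReal]
  exact mul_nonpos_of_nonpos_of_nonneg hc hs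

theorem norm_expMulPowIntegral_le_of_re_nonpos (hc : c.re ≤ 0) (ht : 0 ≤ t) (m : ℕ) :
    ‖expMulPowIntegral c m t‖ ≤ t ^ (m + 1) / (m + 1)! := by
  calc ‖expMulPowIntegral c m t‖ ≤ |∫ s in (0 : ℝ)..t, s ^ m / m !| := by
        refine norm_integral_le_abs_of_norm_le ?_ (by apply Continuous.intervalIntegrable; fun_prop)
        filter_upwards [MeasureTheory.ae_restrict_mem measurableSet_uIoc] with s hs
        rw [Set.uIoc_of_le ht] at hs
        rw [norm_div, norm_mul, norm_pow, norm_real, Real.norm_of_nonneg hs.1.le, norm_natCast]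
        gcongr
        exact mul_le_of_le_one_left (pow_nonneg hs.1.le m) (norm_exp_mul_ofReal_le_one hc hs.1.le)
    _ = t ^ (m + 1) / (m + 1)! := by
        rw [integral_div, integral_pow, zero_pow (succ_ne_zero m), sub_zero,
          abs_of_nonneg (by positivity), factorial_succ]
        push_cast
        rw [div_div]

theorem norm_expMulPowIntegral_le (hc : c.re ≤ 0) (hc2 : 2 ≤ ‖c‖) (ht : 0 ≤ t) (m : ℕ) :
    ‖expMulPowIntegral c m t‖ ≤ t ^ m / m ! := by
  have hc0 : c ≠ 0 := norm_pos_iff.mp (by linarith)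
  induction m with
  | zero =>
    rw [expMulPowIntegral_zero hc0, norm_div]
    have : ‖exp (c * t) - 1‖ ≤ 2 := by
      calc _ ≤ ‖exp (c * t)‖ + ‖(1 : ℂ)‖ := norm_sub_le _ _
        _ ≤ 1 + 1 := by rw [norm_one]; gcongr; exact norm_exp_mul_ofReal_le_one hc ht
        _ = 2 := by norm_num
    simp only [pow_zero, factorial_zero, cast_one, div_one]
    exact div_le_one_of_le₀ (this.trans hc2) (norm_nonneg c)
  | succ m ih =>
    rcases le_total t (m + 1) with hsmall | hlarge
    · calc ‖expMulPowIntegral c (m + 1) t‖ ≤ t ^ (m + 2) / (m + 2)! :=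
            norm_expMulPowIntegral_le_of_re_nonpos hc ht (m + 1)
        _ ≤ t ^ (m + 1) / (m + 1)! := by
            rw [pow_succ_div_factorial_succ]
            refine mul_le_of_le_one_left (by positivity) ((div_le_one (by positivity)).mpr ?_)
            push_cast; linarith
    · have hgrow : t ^ m / m ! ≤ t ^ (m + 1) / (m + 1)! := by
        rw [pow_succ_div_factorial_succ]
        exact le_mul_of_one_le_left (by positivity) ((one_le_div (by positivity)).mpr hlarge)
      rw [expMulPowIntegral_succ hc0]
      calc _ ≤ ‖(t : ℂ) ^ (m + 1) / (m + 1)! * (exp (c * t) / c)‖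
              + ‖expMulPowIntegral c m t / c‖ := norm_sub_le _ _
        _ ≤ t ^ (m + 1) / (m + 1)! / 2 + t ^ m / m ! / 2 := by
            rw [norm_mul, norm_div, norm_div, norm_div, norm_pow, norm_real, norm_natCast,
              Real.norm_of_nonneg ht]
            have hexp := norm_exp_mul_ofReal_le_one hc ht
            gcongr
            rw [div_eq_mul_one_div _ 2]
            gcongr
        _ ≤ t ^ (m + 1) / (m + 1)! := by linarith

/-- For `t ≥ 0` and `m : ℕ`, `|∫₀ᵗ e^{2is} s^m/m! ds| ≤ t^m/m!`. -/
theorem stmt10 (t : ℝ) (ht : 0 ≤ t) (m : ℕ) :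
    ‖∫ s in (0:ℝ)..t, Complex.exp (2 * Complex.I * s) * (s:ℂ) ^ m / (Nat.factorial m : ℂ)‖
      ≤ t ^ m / (Nat.factorial m : ℝ) :=
  norm_expMulPowIntegral_le (by simp) (by simp) ht m
end

section
/- Let Π be an orthogonal projection, H₀ := I − 2Π, A Hermitian with ‖A‖ ≤ 1, δ ∈ (0,1). For k ≥ 2 and a bit string J ∈ {0,1}^{k-1} with J ≠ (1,...,1), let c be the largest index with J_c = 0, and define Φ_k(J) := ∫₀ᵗ e^{2i(J₁−1)t₁} dt₁ ∫₀^{t₁} e^{2i(J₂−J₁)t₂} dt₂ ⋯ ∫₀^{t_{k-1}} e^{2i(1−J_{k-1})t_k} dt_k. Then |Φ_k(J)| ≤ t^{k-1}/(k−1)! for all t ≥ 0. -/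
/-!
Let `c` be the last index with `J c = 0`. Above `c` all phases vanish, so the nested integrals
there are exactly `t ^ (k - 1 - c) / (k - 1 - c)!`. At level `c` the phase is `e^{2iu}`, and
integrating by parts against it bounds that level by the same `t ^ (k - 1 - c) / (k - 1 - c)!`
instead of the trivial `t ^ (k - c) / (k - c)!`; each level below `c` then adds one power of `t`.
-/

open Complex intervalIntegral MeasureTheory Set
open scoped Nat

theorem integral_pow_div_factorial (n : ℕ) (t : ℝ) :
    ∫ u in (0 : ℝ)..t, u ^ n / (n ! : ℝ) = t ^ (n + 1) / ((n + 1)! : ℝ) := by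
  rw [intervalIntegral.integral_div, integral_pow, Nat.factorial_succ]
  push_cast
  field_simp
  ring

theorem integral_ofReal_pow_div_factorial (n : ℕ) (t : ℝ) :
    ∫ u in (0 : ℝ)..t, (u : ℂ) ^ n / (n ! : ℂ) = (t : ℂ) ^ (n + 1) / ((n + 1)! : ℂ) := by
  have h := congrArg ((↑) : ℝ → ℂ) (integral_pow_div_factorial n t)
  rw [← intervalIntegral.integral_ofReal] at h
  push_cast at h
  exact h

theorem norm_integral_le_pow_succ_div_factorial {F : ℝ → ℂ} {n : ℕ} {t : ℝ} (ht : 0 ≤ t)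
    (hF : ∀ u ∈ Ioc 0 t, ‖F u‖ ≤ u ^ n / n !) :
    ‖∫ u in (0 : ℝ)..t, F u‖ ≤ t ^ (n + 1) / (n + 1)! := by
  rw [← integral_pow_div_factorial]
  refine norm_integral_le_of_norm_le ht (ae_of_all _ hF) ?_
  exact ((continuous_pow n).div_const _).intervalIntegrable 0 t

theorem norm_integral_exp_mul_ofReal_le {f f' : ℝ → ℝ} {ω t : ℝ} (hω : ω ≠ 0) (ht : 0 ≤ t)
    (hf : ∀ x ∈ Icc 0 t, HasDerivAt f (f' x) x) (hf' : ContinuousOn f' (Icc 0 t))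
    (hf0 : 0 ≤ f 0) (hf'_nonneg : ∀ x ∈ Icc 0 t, 0 ≤ f' x) :
    ‖∫ u in (0 : ℝ)..t, cexp (ω * u * I) * f u‖ ≤ 2 * f t / |ω| := by
  rw [← uIcc_of_le ht] at hf hf' hf'_nonneg
  have hωI : (ω * I : ℂ) ≠ 0 := mul_ne_zero (ofReal_ne_zero.mpr hω) I_ne_zero
  set v : ℝ → ℂ := fun x => cexp (ω * x * I) / (ω * I)
  have hv : ∀ x ∈ uIcc 0 t, HasDerivAt v (cexp (ω * x * I)) x := by
    intro x _
    have h := (((hasDerivAt_id (x : ℂ)).const_mul (ω : ℂ)).mul_const I).cexp.comp_ofReal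
    simpa [v, mul_div_cancel_right₀ _ hωI] using h.div_const (ω * I)
  have hnorm_v : ∀ x, ‖v x‖ = 1 / |ω| := by
    intro x
    rw [norm_div, ← ofReal_mul, norm_exp_ofReal_mul_I, norm_mul, norm_I, norm_real,
      Real.norm_eq_abs, mul_one]
  have hf'_int : IntervalIntegrable f' volume 0 t := hf'.intervalIntegrable
  have hFTC : ∫ u in (0 : ℝ)..t, f' u = f t - f 0 := integral_eq_sub_of_hasDerivAt hf hf'_int
  have hft : 0 ≤ f t := by
    have := intervalIntegral.integral_nonneg (μ := volume) ht (by rwa [← uIcc_of_le ht])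
    linarith
  have hexp_cont : Continuous fun x : ℝ => cexp (ω * x * I) := by fun_prop
  have ibp := intervalIntegral.integral_mul_deriv_eq_deriv_mul
    (fun x hx => HasDerivAt.ofReal_comp (hf x hx)) hv
    (continuous_ofReal.comp_continuousOn hf').intervalIntegrable (hexp_cont.intervalIntegrable 0 t)
  have hremainder : ‖∫ u in (0 : ℝ)..t, (f' u : ℂ) * v u‖ ≤ (f t - f 0) / |ω| := by
    rw [← hFTC, ← intervalIntegral.integral_div]
    refine norm_integral_le_of_norm_le ht (ae_of_all _ fun x hx => ?_) (hf'_int.div_const _)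
    rw [norm_mul, hnorm_v, norm_real, Real.norm_of_nonneg
      (hf'_nonneg x (uIoc_subset_uIcc (by rwa [uIoc_of_le ht]))), mul_one_div]
  simp_rw [mul_comm (cexp _)]
  rw [ibp]
  calc ‖(f t : ℂ) * v t - (f 0 : ℂ) * v 0 - ∫ u in (0 : ℝ)..t, (f' u : ℂ) * v u‖
      ≤ f t / |ω| + f 0 / |ω| + (f t - f 0) / |ω| := by
        refine (norm_sub_le _ _).trans (add_le_add ((norm_sub_le _ _).trans_eq ?_) hremainder)
        simp only [norm_mul, hnorm_v, norm_real, Real.norm_of_nonneg hft, Real.norm_of_nonneg hf0]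
        ring
    _ = 2 * f t / |ω| := by ring

theorem norm_integral_exp_mul_pow_div_factorial_le {ω t : ℝ} (hω : ω ≠ 0) (ht : 0 ≤ t) (m : ℕ) :
    ‖∫ u in (0 : ℝ)..t, cexp (ω * u * I) * ((u : ℂ) ^ m / m !)‖ ≤ 2 * (t ^ m / m !) / |ω| := by
  have h := norm_integral_exp_mul_ofReal_le (f := fun u => u ^ m / m !)
    (f' := fun u => m * u ^ (m - 1) / m !) hω ht
    (fun x _ => (hasDerivAt_pow m x).div_const _) (by fun_prop) (by positivity)
    (fun x hx => by have := hx.1; positivity)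
  push_cast at h
  exact h

theorem dyson_eq_pow_div_factorial_of_flat {k : ℕ} {J : ℕ → ℕ} {Ψ : ℕ → ℝ → ℂ}
    (hΨk : ∀ t : ℝ, Ψ k t = 1)
    (hΨ : ∀ j < k, ∀ t : ℝ, Ψ j t =
      ∫ u in (0 : ℝ)..t, cexp (2 * I * ((J (j + 1) : ℂ) - (J j : ℂ)) * u) * Ψ (j + 1) u)
    {j : ℕ} (hjk : j ≤ k) (hJ : ∀ i, j ≤ i → i ≤ k → J i = J k) (t : ℝ) :
    Ψ j t = (t : ℂ) ^ (k - j) / (k - j)! := by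
  induction hjk using Nat.decreasingInduction generalizing t with
  | self => simp [hΨk]
  | of_succ j hj ih =>
    have hflat : J (j + 1) = J j := by rw [hJ j le_rfl hj.le, hJ (j + 1) j.le_succ hj]
    rw [hΨ j hj, show k - j = k - (j + 1) + 1 by omega, ← integral_ofReal_pow_div_factorial]
    refine integral_congr fun u _ => ?_
    simp [hflat, ih (fun i hi => hJ i (by omega))]

theorem dyson_norm_le_of_norm_le {k : ℕ} {J : ℕ → ℕ} {Ψ : ℕ → ℝ → ℂ}
    (hΨ : ∀ j < k, ∀ t : ℝ, Ψ j t =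
      ∫ u in (0 : ℝ)..t, cexp (2 * I * ((J (j + 1) : ℂ) - (J j : ℂ)) * u) * Ψ (j + 1) u)
    {c : ℕ} (hck : c < k) (hc : ∀ t, 0 ≤ t → ‖Ψ c t‖ ≤ t ^ (k - 1 - c) / (k - 1 - c)!)
    {j : ℕ} (hjc : j ≤ c) {t : ℝ} (ht : 0 ≤ t) :
    ‖Ψ j t‖ ≤ t ^ (k - 1 - j) / (k - 1 - j)! := by
  induction hjc using Nat.decreasingInduction generalizing t with
  | self => exact hc t ht
  | of_succ j hj ih =>
    rw [hΨ j (by omega), show k - 1 - j = k - 1 - (j + 1) + 1 by omega]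
    refine norm_integral_le_pow_succ_div_factorial ht fun u hu => ?_
    rw [norm_mul, norm_exp]
    simpa using ih hu.1.le

/-- `Ψ j t` is the nested integral from level `j` down, so `Φ_k(J)(t) = Ψ 0 t`, with the
convention `J 0 = J k = 1`. -/
theorem stmt17_general (k : ℕ) (J : ℕ → ℕ)
    (hJ : ∀ j, J j ≤ 1) (hJk : J k = 1)
    (hne : ∃ c, 1 ≤ c ∧ c < k ∧ J c = 0)
    (Ψ : ℕ → ℝ → ℂ)
    (hΨk : ∀ t : ℝ, Ψ k t = 1)
    (hΨ : ∀ j < k, ∀ t : ℝ, Ψ j t =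
      ∫ u in (0:ℝ)..t, Complex.exp (2 * Complex.I * ((J (j+1) : ℂ) - (J j : ℂ)) * u) * Ψ (j+1) u) :
    ∀ t : ℝ, 0 ≤ t → ‖Ψ 0 t‖ ≤ t ^ (k - 1) / (Nat.factorial (k - 1) : ℝ) := by
  intro t ht
  obtain ⟨c₀, -, hc₀k, hJc₀⟩ := hne
  set c := Nat.findGreatest (J · = 0) (k - 1)
  have hJc : J c = 0 := Nat.findGreatest_spec (P := (J · = 0)) (by omega) hJc₀
  have hck : c < k := by have := Nat.findGreatest_le (P := (J · = 0)) (k - 1); omega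
  have hJ_above : ∀ i, c + 1 ≤ i → i ≤ k → J i = J k := fun i hci hik => by
    rcases hik.lt_or_eq with hik | rfl
    · have := Nat.findGreatest_is_greatest (Nat.lt_of_succ_le hci) (Nat.le_sub_one_of_lt hik)
      have := hJ i
      omega
    · rfl
  have hΨc : ∀ s, 0 ≤ s → ‖Ψ c s‖ ≤ s ^ (k - 1 - c) / (k - 1 - c)! := by
    intro s hs
    have h := norm_integral_exp_mul_pow_div_factorial_le (ω := 2) two_ne_zero hs (k - 1 - c)
    rw [abs_two, mul_div_cancel_left₀ _ two_ne_zero] at h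
    rw [hΨ c hck]
    convert h using 4 with u
    rw [dyson_eq_pow_div_factorial_of_flat hΨk hΨ hck hJ_above, hJ_above (c + 1) le_rfl hck,
      hJk, hJc, show k - (c + 1) = k - 1 - c by omega]
    push_cast
    ring_nf
  simpa using dyson_norm_le_of_norm_le hΨ hck hΨc (Nat.zero_le c) ht

/-- Bound on the iterated Dyson phase integral `Φ_k(J)` for a path `J ≠ (1,…,1)`.
The nested integral is encoded by functions `Ψ j`, with `Ψ k = 1`,
`Ψ j (t) = ∫₀ᵗ e^{2i(J_{j+1}-J_j)u} Ψ_{j+1}(u) du`, and `Φ_k(J)(t) = Ψ 0 t`,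
where `J 0 = J k = 1`. Then `|Φ_k(J)| ≤ t^{k-1}/(k-1)!`. -/
theorem stmt17 (k : ℕ) (hk : 2 ≤ k) (J : ℕ → ℕ)
    (hJ : ∀ j, J j ≤ 1) (hJ0 : J 0 = 1) (hJk : J k = 1)
    (hne : ∃ c, 1 ≤ c ∧ c < k ∧ J c = 0)
    (Ψ : ℕ → ℝ → ℂ)
    (hΨk : ∀ t : ℝ, Ψ k t = 1)
    (hΨ : ∀ j < k, ∀ t : ℝ, Ψ j t =
      ∫ u in (0:ℝ)..t, Complex.exp (2 * Complex.I * ((J (j+1) : ℂ) - (J j : ℂ)) * u) * Ψ (j+1) u) :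
    ∀ t : ℝ, 0 ≤ t → ‖Ψ 0 t‖ ≤ t ^ (k - 1) / (Nat.factorial (k - 1) : ℝ) :=
  stmt17_general k J hJ hJk hne Ψ hΨk hΨ
end
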